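/- Let g ≥ 1 and Ω ∈ ℋ_g. Then the Riemann theta function z ↦ θ(Ω;z) = ∑_{n∈ℤ^g} exp(πi nᵀΩn + 2πi nᵀz) is complex-differentiable (holomorphic) as a function ℂ^g → ℂ, i.e., it is Differentiable over ℂ on all of ℂ^g. -/

import Mathlib

open scoped Real
open Matrix MeasureTheory

noncomputable section

/-- An integer vector viewed as a vector in `ℂ^g`. -/
def zc {g : ℕ} (n : Fin g → ℤ) : Fin g → ℂ := fun i => (n i : ℂ)

/-- A real vector viewed as a vector in `ℂ^g`. -/
def rc {g : ℕ} (x : Fin g → ℝ) : Fin g → ℂ := fun i => (x i : ℂ)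

/-- An integer vector viewed as a vector in `ℝ^g`. -/
def zr {g : ℕ} (n : Fin g → ℤ) : Fin g → ℝ := fun i => (n i : ℝ)

/-- The entrywise imaginary part of a complex vector. -/
def imVec {g : ℕ} (z : Fin g → ℂ) : Fin g → ℝ := fun i => (z i).im

/-- A single term of the Riemann theta series:
`exp(πi nᵀΩn + 2πi nᵀz)`. -/
def thetaTerm {g : ℕ} (Ω : Matrix (Fin g) (Fin g) ℂ) (z : Fin g → ℂ) (n : Fin g → ℤ) : ℂ :=
  Complex.exp ((Real.pi : ℂ) * Complex.I * (zc n ⬝ᵥ Ω.mulVec (zc n)) +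
    2 * (Real.pi : ℂ) * Complex.I * (zc n ⬝ᵥ z))

/-- The Riemann theta function `θ(Ω;z) = ∑_{n ∈ ℤ^g} exp(πi nᵀΩn + 2πi nᵀz)`. -/
def theta {g : ℕ} (Ω : Matrix (Fin g) (Fin g) ℂ) (z : Fin g → ℂ) : ℂ :=
  ∑' n : Fin g → ℤ, thetaTerm Ω z n

/-! Because `Im Ω` is positive definite, `nᵀ (Im Ω) n ≥ c ∑ nᵢ²` for some `c > 0`. Hence for
`‖z‖ ≤ R` the `n`-th term of the series is bounded by `∏ᵢ exp (-π c nᵢ² + 2π R |nᵢ|)`, and its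
derivative, which is the term times `2πi nᵀ`, by `2π ∏ᵢ exp (-π c nᵢ² + (2π R + 1) |nᵢ|)`
(using `∑ |nᵢ| ≤ exp ∑ |nᵢ|`). Both majorants are products of summable one-dimensional Gaussian
sequences, so the series of derivatives converges uniformly on balls and the theta function is
holomorphic. -/

open Metric

theorem exists_pos_mul_norm_sq_le {E : Type*} [NormedAddCommGroup E] [NormedSpace ℝ E]
    [FiniteDimensional ℝ E] {Q : E → ℝ} (hQ : Continuous Q)
    (hsmul : ∀ (t : ℝ) (x : E), Q (t • x) = t ^ 2 * Q x) (hpos : ∀ x ≠ 0, 0 < Q x) :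
    ∃ c > 0, ∀ x, c * ‖x‖ ^ 2 ≤ Q x := by
  have hQ0 : Q 0 = 0 := by simpa using hsmul 0 0
  rcases subsingleton_or_nontrivial E with hE | hE
  · exact ⟨1, one_pos, fun x => by simp [Subsingleton.elim x 0, hQ0]⟩
  obtain ⟨u, hu, hmin⟩ := (isCompact_sphere (0 : E) 1).exists_isMinOn
    (NormedSpace.sphere_nonempty.mpr zero_le_one) hQ.continuousOn
  have hu0 : u ≠ 0 := ne_zero_of_mem_unit_sphere ⟨u, hu⟩
  refine ⟨Q u, hpos u hu0, fun x => ?_⟩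
  rcases eq_or_ne x 0 with rfl | hx
  · simp [hQ0]
  have hxn : ‖x‖ ≠ 0 := norm_ne_zero_iff.mpr hx
  have hmem : ‖x‖⁻¹ • x ∈ sphere (0 : E) 1 := by
    simp [norm_smul, hxn]
  calc Q u * ‖x‖ ^ 2 ≤ Q (‖x‖⁻¹ • x) * ‖x‖ ^ 2 := by gcongr; exact hmin hmem
    _ = Q x := by rw [hsmul]; field_simp

theorem Matrix.PosDef.exists_pos_mul_dotProduct_self_le {n : Type*} [Fintype n]
    {Y : Matrix n n ℝ} (hY : Y.PosDef) :
    ∃ c > 0, ∀ x : n → ℝ, c * (x ⬝ᵥ x) ≤ x ⬝ᵥ Y *ᵥ x := by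
  obtain ⟨c, hc, hle⟩ := exists_pos_mul_norm_sq_le
    (Q := fun x : EuclideanSpace ℝ n => x.ofLp ⬝ᵥ Y *ᵥ x.ofLp) (by fun_prop)
    (fun t x => by
      simp only [WithLp.ofLp_smul, mulVec_smul, dotProduct_smul, smul_dotProduct, smul_eq_mul]
      ring)
    (fun x hx => by simpa using hY.dotProduct_mulVec_pos (x := x.ofLp) (by simpa using hx))
  refine ⟨c, hc, fun x => ?_⟩
  have := hle (WithLp.toLp 2 x)
  rw [EuclideanSpace.real_norm_sq_eq] at this
  simpa [dotProduct, sq] using this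

theorem summable_pi_prod_of_nonneg {ι α : Type*} [Fintype ι] {f : ι → α → ℝ}
    (hf0 : ∀ i a, 0 ≤ f i a) (hf : ∀ i, Summable (f i)) :
    Summable fun x : ι → α => ∏ i, f i (x i) := by
  classical
  refine summable_of_sum_le (c := ∏ i, ∑' a, f i a)
    (fun x => Finset.prod_nonneg fun i _ => hf0 i (x i)) fun s => ?_
  calc ∑ x ∈ s, ∏ i, f i (x i)
      ≤ ∑ x ∈ Fintype.piFinset fun i => s.image (· i), ∏ i, f i (x i) :=
        Finset.sum_le_sum_of_subset_of_nonneg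
          (fun x hx => Fintype.mem_piFinset.mpr fun i => Finset.mem_image_of_mem _ hx)
          fun x _ _ => Finset.prod_nonneg fun i _ => hf0 i (x i)
    _ = ∏ i, ∑ a ∈ s.image (· i), f i a := (Finset.prod_univ_sum _ _).symm
    _ ≤ ∏ i, ∑' a, f i a := Finset.prod_le_prod
        (fun i _ => Finset.sum_nonneg fun a _ => hf0 i a)
        fun i _ => (hf i).sum_le_tsum _ fun a _ => hf0 i a

theorem summable_exp_neg_mul_sq_add_mul_abs {a : ℝ} (ha : 0 < a) (b : ℝ) :
    Summable fun m : ℤ => Real.exp (-a * m ^ 2 + b * |(m : ℝ)|) := by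
  refine (summable_pow_mul_jacobiTheta₂_term_bound (b / (2 * π)) (T := a / π)
    (by positivity) 0).congr fun m => ?_
  rw [pow_zero, one_mul]
  congr 1
  push_cast
  field_simp
  ring

theorem summable_pi_prod_exp_neg_mul_sq_add_mul_abs {ι : Type*} [Fintype ι] {a : ℝ} (ha : 0 < a)
    (b : ℝ) : Summable fun n : ι → ℤ => ∏ i, Real.exp (-a * n i ^ 2 + b * |(n i : ℝ)|) :=
  summable_pi_prod_of_nonneg (f := fun _ (m : ℤ) => Real.exp (-a * m ^ 2 + b * |(m : ℝ)|))
    (fun _ _ => (Real.exp_pos _).le)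
    fun _ => summable_exp_neg_mul_sq_add_mul_abs ha b

section Theta

variable {g : ℕ} {Ω : Matrix (Fin g) (Fin g) ℂ}

theorem norm_thetaTerm (z : Fin g → ℂ) (n : Fin g → ℤ) :
    ‖thetaTerm Ω z n‖ = Real.exp (-π * (zr n ⬝ᵥ Ω.map Complex.im *ᵥ zr n)
      - 2 * π * ∑ i, (n i : ℝ) * (z i).im) := by
  have hquad : (zc n ⬝ᵥ Ω *ᵥ zc n).im = zr n ⬝ᵥ Ω.map Complex.im *ᵥ zr n := by
    simp [dotProduct, mulVec, zc, zr, Complex.im_sum, Finset.mul_sum]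
  have hlin : (zc n ⬝ᵥ z).im = ∑ i, (n i : ℝ) * (z i).im := by
    simp [dotProduct, zc, Complex.im_sum]
  have hre : ∀ (r : ℝ) (w : ℂ), ((r : ℂ) * Complex.I * w).re = -r * w.im := fun r w => by
    simp [Complex.mul_re]
  rw [thetaTerm, Complex.norm_exp, Complex.add_re, ← Complex.ofReal_ofNat, ← Complex.ofReal_mul,
    hre, hre, hquad, hlin]
  congr 1
  ring

theorem norm_thetaTerm_le {c : ℝ} (hq : ∀ x, c * (x ⬝ᵥ x) ≤ x ⬝ᵥ Ω.map Complex.im *ᵥ x)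
    {R : ℝ} {z : Fin g → ℂ} (hz : ‖z‖ ≤ R) (n : Fin g → ℤ) :
    ‖thetaTerm Ω z n‖ ≤ ∏ i, Real.exp (-(π * c) * n i ^ 2 + 2 * π * R * |(n i : ℝ)|) := by
  have hquad : c * ∑ i, (n i : ℝ) ^ 2 ≤ zr n ⬝ᵥ Ω.map Complex.im *ᵥ zr n := by
    simpa [dotProduct, zr, sq] using hq (zr n)
  have hlin : -(R * ∑ i, |(n i : ℝ)|) ≤ ∑ i, (n i : ℝ) * (z i).im := by
    rw [Finset.mul_sum, ← Finset.sum_neg_distrib]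
    refine Finset.sum_le_sum fun i _ => ?_
    have him : |(z i).im| ≤ R := (Complex.abs_im_le_norm _).trans ((norm_le_pi_norm z i).trans hz)
    calc -(R * |(n i : ℝ)|) ≤ -|(n i : ℝ) * (z i).im| := by rw [abs_mul, mul_comm]; gcongr
      _ ≤ (n i : ℝ) * (z i).im := neg_abs_le _
  rw [norm_thetaTerm, ← Real.exp_sum]
  gcongr
  rw [Finset.sum_add_distrib, ← Finset.mul_sum, ← Finset.mul_sum]
  nlinarith [Real.pi_pos]

def intDotCLM (n : Fin g → ℤ) : (Fin g → ℂ) →L[ℂ] ℂ :=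
  ∑ i, (n i : ℂ) • ContinuousLinearMap.proj i

theorem intDotCLM_apply (n : Fin g → ℤ) (w : Fin g → ℂ) : intDotCLM n w = zc n ⬝ᵥ w := by
  simp [intDotCLM, dotProduct, zc]

theorem norm_intDotCLM_le (n : Fin g → ℤ) : ‖intDotCLM n‖ ≤ ∑ i, |(n i : ℝ)| := by
  refine (norm_sum_le _ _).trans (Finset.sum_le_sum fun i _ => ?_)
  rw [norm_smul, Complex.norm_intCast]
  exact mul_le_of_le_one_right (abs_nonneg _)
    (ContinuousLinearMap.opNorm_le_bound _ zero_le_one fun z => by simpa using norm_le_pi_norm z i)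

theorem hasFDerivAt_thetaTerm (n : Fin g → ℤ) (z : Fin g → ℂ) :
    HasFDerivAt (thetaTerm Ω · n)
      (thetaTerm Ω z n • (2 * (π : ℂ) * Complex.I) • intDotCLM n) z := by
  simp_rw [thetaTerm, ← intDotCLM_apply]
  exact ((((intDotCLM n).hasFDerivAt).const_smul (2 * (π : ℂ) * Complex.I)).const_add _).cexp

theorem norm_thetaTerm_smul_intDotCLM_le {c : ℝ}
    (hq : ∀ x, c * (x ⬝ᵥ x) ≤ x ⬝ᵥ Ω.map Complex.im *ᵥ x) {R : ℝ} {z : Fin g → ℂ} (hz : ‖z‖ ≤ R)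
    (n : Fin g → ℤ) :
    ‖thetaTerm Ω z n • (2 * (π : ℂ) * Complex.I) • intDotCLM n‖ ≤
      2 * π * ∏ i, Real.exp (-(π * c) * n i ^ 2 + (2 * π * R + 1) * |(n i : ℝ)|) := by
  have hdot : ‖intDotCLM n‖ ≤ ∏ i, Real.exp |(n i : ℝ)| := by
    rw [← Real.exp_sum]
    exact (norm_intDotCLM_le n).trans (le_add_of_nonneg_right zero_le_one |>.trans
      (Real.add_one_le_exp _))
  calc ‖thetaTerm Ω z n • (2 * (π : ℂ) * Complex.I) • intDotCLM n‖
      = ‖thetaTerm Ω z n‖ * (2 * π * ‖intDotCLM n‖) := by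
        simp [norm_smul, abs_of_pos Real.pi_pos]
    _ ≤ (∏ i, Real.exp (-(π * c) * n i ^ 2 + 2 * π * R * |(n i : ℝ)|)) *
        (2 * π * ∏ i, Real.exp |(n i : ℝ)|) := by
        gcongr
        exact norm_thetaTerm_le hq hz n
    _ = 2 * π * ∏ i, Real.exp (-(π * c) * n i ^ 2 + (2 * π * R + 1) * |(n i : ℝ)|) := by
        rw [mul_left_comm, ← Finset.prod_mul_distrib]
        congr 2 with i
        rw [← Real.exp_add]
        congr 1
        ring

theorem summable_thetaTerm (hpos : (Ω.map Complex.im).PosDef) (z : Fin g → ℂ) :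
    Summable (thetaTerm Ω z) := by
  obtain ⟨c, hc, hq⟩ := hpos.exists_pos_mul_dotProduct_self_le
  exact .of_norm_bounded (summable_pi_prod_exp_neg_mul_sq_add_mul_abs (by positivity) _)
    (norm_thetaTerm_le hq le_rfl)

theorem differentiableOn_theta_ball (hpos : (Ω.map Complex.im).PosDef) (R : ℝ) :
    DifferentiableOn ℂ (theta Ω) (ball 0 R) := by
  obtain ⟨c, hc, hq⟩ := hpos.exists_pos_mul_dotProduct_self_le
  intro z hz
  have hmajorant := (summable_pi_prod_exp_neg_mul_sq_add_mul_abs (ι := Fin g)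
    (by positivity : 0 < π * c) (2 * π * R + 1)).mul_left (2 * π)
  exact (hasFDerivAt_tsum_of_isPreconnected hmajorant isOpen_ball
    (convex_ball 0 R).isPreconnected (fun n w _ => hasFDerivAt_thetaTerm n w)
    (fun n w hw => norm_thetaTerm_smul_intDotCLM_le hq (mem_ball_zero_iff.mp hw).le n) hz
    (summable_thetaTerm hpos z) hz).differentiableAt.differentiableWithinAt

end Theta

theorem statement12_general (g : ℕ) (Ω : Matrix (Fin g) (Fin g) ℂ)
    (hpos : (Ω.map Complex.im).PosDef) :
    Differentiable ℂ (fun z : Fin g → ℂ => theta Ω z) := fun z =>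
  (differentiableOn_theta_ball hpos (‖z‖ + 1)).differentiableAt
    (isOpen_ball.mem_nhds (by simp))

/-- the Riemann theta function `z ↦ θ(Ω;z)` is holomorphic on `ℂ^g`. -/
theorem statement12 (g : ℕ) (hg : 1 ≤ g) (Ω : Matrix (Fin g) (Fin g) ℂ)
    (hsym : Ω.IsSymm) (hpos : (Ω.map Complex.im).PosDef) :
    Differentiable ℂ (fun z : Fin g → ℂ => theta Ω z) :=
  statement12_general g Ω hpos
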